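/- arXiv:1204.3771 — 2 statements merged into one kernel-verified Lean document; each statement's English description precedes it below -/
import Mathlib

section
/- For every integer n ≥ 2 and all integers i, j with 2 ≤ i < j ≤ 2n, the cardinality of 𝔅_n(i,j) equals the cardinality of 𝔅_{n−1}(j−2). (A bijection is given by deleting the first r and the first f of a path.) -/
/-!
A path of `𝔅_n(i,j)` has the form `r^{i-1} f r^{j-i-1} f v` and a path of `𝔅_{n-1}(j-2)` the
form `r^{j-3} f v`, so both sets are parametrised by the same tails `v`. The ballot condition
`2 · #f ≤ length` (equivalent to `#f ≤ #r` since `#f + #r = length`) holds automatically on the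
prefixes ending before the second `f`; on every longer prefix, the long word has exactly one
more `f` than the corresponding prefix of the short word, which is two letters shorter, so the
condition transfers in both directions.
-/

/-- A `B_n`-path: a word of length `2n` over the alphabet `{r, f}` (here `true` stands
for `r` and `false` for `f`) such that every prefix contains at least as many `r`'s
as `f`'s. -/
def BPaths (n : ℕ) : Finset (Fin (2*n) → Bool) :=
  Finset.univ.filter fun w =>
    ∀ m : Fin (2*n + 1),
      (Finset.univ.filter fun i : Fin (2*n) => (i : ℕ) < (m : ℕ) ∧ w i = false).card ≤
      (Finset.univ.filter fun i : Fin (2*n) => (i : ℕ) < (m : ℕ) ∧ w i = true).card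

/-- `𝔅_n(i)`: the set of `B_n`-paths whose first (leftmost) `f` occurs at the
(1-indexed) position `i`; by convention, for `i = 2n+1` this is the singleton
consisting of the all-`r` path. -/
def BPathsF (n i : ℕ) : Finset (Fin (2*n) → Bool) :=
  (BPaths n).filter fun w =>
    (∀ j : Fin (2*n), (j : ℕ) + 1 < i → w j = true) ∧
    (∀ j : Fin (2*n), (j : ℕ) + 1 = i → w j = false)

/-- `𝔅_n(i, j)`: the set of `B_n`-paths whose first (leftmost) `f` occurs at the
(1-indexed) position `i` and whose second `f` occurs at position `j`. -/
def BPathsFF (n i j : ℕ) : Finset (Fin (2*n) → Bool) :=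
  (BPaths n).filter fun w =>
    (∀ m : Fin (2*n), (m : ℕ) + 1 < i → w m = true) ∧
    (∀ m : Fin (2*n), (m : ℕ) + 1 = i → w m = false) ∧
    (∀ m : Fin (2*n), i < (m : ℕ) + 1 → (m : ℕ) + 1 < j → w m = true) ∧
    (∀ m : Fin (2*n), (m : ℕ) + 1 = j → w m = false)

open Finset

section PrefixCount

variable {N : ℕ}

def prefixCount (w : Fin N → Bool) (p : ℕ) (b : Bool) : ℕ :=
  #{m : Fin N | (m : ℕ) < p ∧ w m = b}

theorem prefixCount_eq_zero (w : Fin N → Bool) (b : Bool) {c : ℕ}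
    (hne : ∀ m : Fin N, (m : ℕ) < c → w m ≠ b) : prefixCount w c b = 0 :=
  card_eq_zero.mpr (filter_eq_empty_iff.mpr fun m _ ⟨hm, hb⟩ => hne m hm hb)

theorem prefixCount_succ (w : Fin N → Bool) (b : Bool) {p : ℕ} (hp : p < N) :
    prefixCount w (p + 1) b = prefixCount w p b + if w ⟨p, hp⟩ = b then 1 else 0 := by
  have hsplit : univ.filter (fun m : Fin N => (m : ℕ) < p + 1 ∧ w m = b) =
      univ.filter (fun m : Fin N => (m : ℕ) < p ∧ w m = b) ∪
        univ.filter (fun m : Fin N => m = ⟨p, hp⟩ ∧ w m = b) := by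
    ext m
    simp only [mem_filter, mem_univ, true_and, mem_union, Fin.ext_iff, Nat.lt_succ_iff_lt_or_eq,
      or_and_right]
  rw [prefixCount, hsplit, card_union_of_disjoint, prefixCount]
  · congr 1
    split_ifs with h
    · rw [card_eq_one]
      refine ⟨⟨p, hp⟩, ?_⟩
      ext m
      simp only [mem_filter, mem_univ, true_and, mem_singleton]
      grind
    · simp only [card_eq_zero, filter_eq_empty_iff]
      grind
  · rw [disjoint_filter]
    rintro m - ⟨hm, -⟩ ⟨rfl, -⟩
    exact lt_irrefl _ hm

theorem prefixCount_false_add_true (w : Fin N → Bool) {p : ℕ} (hp : p ≤ N) :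
    prefixCount w p false + prefixCount w p true = p := by
  induction p with
  | zero => simp [prefixCount]
  | succ p ih =>
    rw [prefixCount_succ w _ (by omega), prefixCount_succ w _ (by omega)]
    cases w ⟨p, by omega⟩ <;>
      simp only [Bool.false_eq_true, Bool.true_eq_false, ↓reduceIte] <;> omega

theorem prefixCount_eq_of_forall_ne (w : Fin N → Bool) (b : Bool) {a c : ℕ} (hac : a ≤ c)
    (hc : c ≤ N) (hne : ∀ m : Fin N, a ≤ m → (m : ℕ) < c → w m ≠ b) :
    prefixCount w c b = prefixCount w a b := by
  induction c, hac using Nat.le_induction with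
  | base => rfl
  | succ c hac ih =>
    rw [prefixCount_succ w b (by omega), if_neg (hne _ hac (Nat.lt_succ_self c)),
      ih (by omega) fun m ham hmc => hne m ham (by omega), add_zero]

theorem prefixCount_add_eq_of_shift {N' d k : ℕ} (hN : N' + d ≤ N) (w : Fin N → Bool)
    (w' : Fin N' → Bool)
    (hw : ∀ (q : ℕ) (hq : q < N'), k ≤ q → w ⟨q + d, by omega⟩ = w' ⟨q, hq⟩)
    (b : Bool) {p : ℕ} (hkp : k ≤ p) (hp : p ≤ N') :
    prefixCount w (p + d) b + prefixCount w' k b =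
      prefixCount w' p b + prefixCount w (k + d) b := by
  induction p, hkp using Nat.le_induction with
  | base => ac_rfl
  | succ p hkp ih =>
    rw [Nat.add_right_comm, prefixCount_succ w b (by omega), prefixCount_succ w' b (by omega),
      hw p (by omega) hkp]
    linarith [ih (by omega)]

def IsBallot (w : Fin N → Bool) : Prop :=
  ∀ p ≤ N, 2 * prefixCount w p false ≤ p

theorem mem_BPaths_iff_isBallot {n : ℕ} (w : Fin (2 * n) → Bool) :
    w ∈ BPaths n ↔ IsBallot w := by
  simp only [BPaths, mem_filter, mem_univ, true_and, IsBallot]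
  refine ⟨fun h p hp => ?_, fun h m => ?_⟩
  · have hle : prefixCount w p false ≤ prefixCount w p true := h ⟨p, by omega⟩
    have := prefixCount_false_add_true w hp
    omega
  · have hle := h m (by omega)
    have := prefixCount_false_add_true w (p := m) (by omega)
    change prefixCount w m false ≤ prefixCount w m true
    omega

theorem prefixCount_false_eq_of_single_false {i j : ℕ} (hi : 1 ≤ i) (hij : i < j) (hj : j ≤ N)
    {w : Fin N → Bool}
    (hw_r : ∀ m : Fin N, (m : ℕ) + 1 < j → (m : ℕ) + 1 ≠ i → w m = true)
    (hw_f : ∀ m : Fin N, (m : ℕ) + 1 = i → w m = false) {p : ℕ} (hp : p ≤ j - 1) :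
    prefixCount w p false = if i ≤ p then 1 else 0 := by
  split_ifs with hip
  · have hpre : prefixCount w (i - 1) false = 0 :=
      prefixCount_eq_zero w false fun m hm => by simp [hw_r m (by omega) (by omega)]
    have hstep := prefixCount_succ w false (p := i - 1) (by omega)
    rw [hpre, hw_f ⟨i - 1, _⟩ (Nat.sub_add_cancel hi), Nat.sub_add_cancel hi] at hstep
    rw [prefixCount_eq_of_forall_ne w false hip (by omega)
      fun m hm hmp => by simp [hw_r m (by omega) (by omega)], hstep, if_pos rfl]
  · exact prefixCount_eq_zero w false fun m hm => by simp [hw_r m (by omega) (by omega)]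

theorem isBallot_iff_of_shift {N' i j : ℕ} (hN : N' + 2 = N) (hi : 2 ≤ i) (hij : i < j)
    (hj : j ≤ N) (w : Fin N → Bool) (w' : Fin N' → Bool)
    (hw_r : ∀ m : Fin N, (m : ℕ) + 1 < j → (m : ℕ) + 1 ≠ i → w m = true)
    (hw_f : ∀ m : Fin N, (m : ℕ) + 1 = i → w m = false)
    (hw'_r : ∀ q : Fin N', (q : ℕ) + 3 < j → w' q = true)
    (hagree : ∀ (q : ℕ) (hq : q < N'), j ≤ q + 3 →
      w ⟨q + 2, by omega⟩ = w' ⟨q, hq⟩) :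
    IsBallot w ↔ IsBallot w' := by
  have hF := fun p => prefixCount_false_eq_of_single_false (by omega) hij hj hw_r hw_f (p := p)
  have hF' : ∀ p ≤ j - 3, prefixCount w' p false = 0 := fun p hp =>
    prefixCount_eq_zero w' false fun q hq => by simp [hw'_r q (by omega)]
  have hshift : ∀ p, j - 3 ≤ p → p ≤ N' →
      prefixCount w (p + 2) false = prefixCount w' p false + 1 := fun p hkp hp => by
    have := prefixCount_add_eq_of_shift hN.le w w' (k := j - 3)
      (fun q hq hkq => hagree q hq (by omega)) false hkp hp
    rw [show j - 3 + 2 = j - 1 by omega, hF' _ le_rfl, hF _ le_rfl, if_pos (by omega)] at this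
    omega
  constructor
  · intro hw p hp
    by_cases hpj : p ≤ j - 3
    · simp [hF' p hpj]
    · have := hw (p + 2) (by omega)
      rw [hshift p (by omega) hp] at this
      omega
  · intro hw' p hp
    by_cases hpj : p ≤ j - 1
    · rw [hF p hpj]
      split_ifs <;> omega
    · obtain ⟨q, rfl⟩ : ∃ q, p = q + 2 := ⟨p - 2, by omega⟩
      have := hw' q (by omega)
      rw [hshift q (by omega) (by omega)]
      omega

end PrefixCount

section Bijection

variable {n i j : ℕ}

-- On `𝔅_n(i,j)` this deletes the first `r` and the first `f`: both words are `r^{j-3}`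
-- followed by the letters of `w` from position `j` on.
def deleteFirstRF (j : ℕ) (w : Fin (2 * n) → Bool) : Fin (2 * (n - 1)) → Bool :=
  fun q => if (q : ℕ) + 3 < j then true else w ⟨q + 2, by omega⟩

-- The clause `m < 2` is redundant once `3 ≤ j`; it only makes the index `m - 2` valid.
def insertFirstRF (i j : ℕ) (w' : Fin (2 * (n - 1)) → Bool) : Fin (2 * n) → Bool :=
  fun m => if h : (m : ℕ) + 1 < j ∨ (m : ℕ) < 2 then decide ((m : ℕ) + 1 ≠ i)
    else w' ⟨m - 2, by omega⟩

theorem isBallot_iff_isBallot_deleteFirstRF (hi : 2 ≤ i) (hij : i < j) (hj : j ≤ 2 * n)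
    {w : Fin (2 * n) → Bool}
    (hw_r : ∀ m : Fin (2 * n), (m : ℕ) + 1 < j → (m : ℕ) + 1 ≠ i → w m = true)
    (hw_f : ∀ m : Fin (2 * n), (m : ℕ) + 1 = i → w m = false) :
    IsBallot w ↔ IsBallot (deleteFirstRF j w) :=
  isBallot_iff_of_shift (by omega) hi hij hj w _ hw_r hw_f
    (fun q hq => by simp [deleteFirstRF, hq]) (fun q hq hjq => by simp [deleteFirstRF, hjq])

theorem deleteFirstRF_mem (hi : 2 ≤ i) (hij : i < j) (hj : j ≤ 2 * n) {w : Fin (2 * n) → Bool}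
    (hw : w ∈ BPathsFF n i j) : deleteFirstRF j w ∈ BPathsF (n - 1) (j - 2) := by
  obtain ⟨hwB, hA, hB, hC, hD⟩ := mem_filter.mp hw
  refine mem_filter.mpr ⟨?_, fun q hq => ?_, fun q hq => ?_⟩
  · rw [mem_BPaths_iff_isBallot] at hwB ⊢
    refine (isBallot_iff_isBallot_deleteFirstRF hi hij hj (fun m hmj hmi => ?_) hB).mp hwB
    exact (lt_or_gt_of_ne hmi).elim (hA m) (fun h => hC m h hmj)
  · simp [deleteFirstRF, show (q : ℕ) + 3 < j by omega]
  · rw [deleteFirstRF, if_neg (by omega)]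
    exact hD _ (by rw [Fin.val_mk]; omega)

theorem deleteFirstRF_insertFirstRF {w' : Fin (2 * (n - 1)) → Bool}
    (hw' : w' ∈ BPathsF (n - 1) (j - 2)) : deleteFirstRF j (insertFirstRF i j w') = w' := by
  funext q
  by_cases hq : (q : ℕ) + 3 < j
  · simp only [deleteFirstRF, if_pos hq]
    exact ((mem_filter.mp hw').2.1 q (by omega)).symm
  · simp only [deleteFirstRF, insertFirstRF, if_neg hq]
    rw [dif_neg (by omega)]
    simp

theorem insertFirstRF_deleteFirstRF (hi : 2 ≤ i) {w : Fin (2 * n) → Bool}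
    (hw : w ∈ BPathsFF n i j) : insertFirstRF i j (deleteFirstRF j w) = w := by
  obtain ⟨-, hA, hB, hC, -⟩ := mem_filter.mp hw
  funext m
  by_cases hm : (m : ℕ) + 1 < j ∨ (m : ℕ) < 2
  · rw [insertFirstRF, dif_pos hm]
    rcases lt_trichotomy ((m : ℕ) + 1) i with h | h | h
    · simp [hA m h, h.ne]
    · simp [hB m h, h]
    · simp [hC m h (by omega), h.ne']
  · simp only [insertFirstRF, dif_neg hm, deleteFirstRF,
      if_neg (show ¬ (m : ℕ) - 2 + 3 < j by omega)]
    congr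
    omega

theorem insertFirstRF_mem (hi : 2 ≤ i) (hij : i < j) (hj : j ≤ 2 * n)
    {w' : Fin (2 * (n - 1)) → Bool}
    (hw' : w' ∈ BPathsF (n - 1) (j - 2)) : insertFirstRF i j w' ∈ BPathsFF n i j := by
  have hA : ∀ m : Fin (2 * n), (m : ℕ) + 1 < j → (m : ℕ) + 1 ≠ i →
      insertFirstRF i j w' m = true :=
    fun m hmj hmi => by simp [insertFirstRF, hmj, hmi]
  have hB : ∀ m : Fin (2 * n), (m : ℕ) + 1 = i → insertFirstRF i j w' m = false :=
    fun m hmi => by rw [insertFirstRF, dif_pos (Or.inl (by omega))]; simp [hmi]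
  refine mem_filter.mpr ⟨?_, fun m hm => hA m (by omega) hm.ne, hB,
    fun m hm hmj => hA m hmj hm.ne', fun m hm => ?_⟩
  · rw [mem_BPaths_iff_isBallot, isBallot_iff_isBallot_deleteFirstRF hi hij hj hA hB,
      deleteFirstRF_insertFirstRF hw', ← mem_BPaths_iff_isBallot]
    exact (mem_filter.mp hw').1
  · rw [insertFirstRF, dif_neg (by omega)]
    exact (mem_filter.mp hw').2.2 _ (by rw [Fin.val_mk]; omega)

end Bijection

theorem card_BPathsFF_general (n i j : ℕ) (hi : 2 ≤ i) (hij : i < j)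
    (hj : j ≤ 2*n) :
    (BPathsFF n i j).card = (BPathsF (n-1) (j-2)).card :=
  card_bij' (fun w _ => deleteFirstRF j w) (fun w' _ => insertFirstRF i j w')
    (fun _ hw => deleteFirstRF_mem hi hij hj hw) (fun _ hw' => insertFirstRF_mem hi hij hj hw')
    (fun _ hw => insertFirstRF_deleteFirstRF hi hw)
    (fun _ hw' => deleteFirstRF_insertFirstRF hw')

/-- For `2 ≤ i < j ≤ 2n`, the cardinality of `𝔅_n(i,j)` equals that of
`𝔅_{n-1}(j-2)` (a bijection is given by deleting the first `r` and the first `f`). -/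
theorem card_BPathsFF (n i j : ℕ) (hn : 2 ≤ n) (hi : 2 ≤ i) (hij : i < j)
    (hj : j ≤ 2*n) :
    (BPathsFF n i j).card = (BPathsF (n-1) (j-2)).card :=
  card_BPathsFF_general n i j hi hij hj
end

section
/- For every integer n ≥ 2, n(n+1) · ∑_{k=1}^{n−2} 2^k · ∑_{b=1}^{n−2} (b²−3)·( C(2n−b−k−4, n−k−2) − C(2n−b−k−4, n−2) ) = 4·(3n³ + 7n² − 7n + 1)·C(2n−3, n−2) − n(n+1)(n²−1)·2^{n−1} − 2n(n+1)(3n−1)·C(2n−2, n−1). -/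
/-!
Write `b ^ 2 - 3 = 2 * C(b, 2) + C(b, 1) - 3 * C(b, 0)`. Each inner sum over `b` is then a
combination of three instances of the upper Vandermonde identity
`∑ b, C(b, j) * C(m - b, r) = C(m + 1, j + r + 1)`, and after symmetry `C(m, r) = C(m, m - r)`
it becomes a combination of differences `C(2n - 3 - k, s) - C(2n - 3 - k, s + 1)`.
By Pascal's rule `2 ^ k` times such a difference telescopes in `k`. The boundary terms at
`k = n - 2` are explicit binomials `C(n - 1, ·)`, and those at `k = 0` reduce to
`C(2n - 3, n - 2)` through `C(m, r + 1) * (r + 1) = C(m, r) * (m - r)`.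
-/

/-- The binomial coefficient `C(m, r)` for integer arguments, with the convention
that `C(m, r) = 0` when `r < 0` or `r > m`. -/
def intChoose (m r : ℤ) : ℤ :=
  if 0 ≤ r ∧ r ≤ m then ((m.toNat).choose r.toNat : ℤ) else 0

open Finset

theorem Nat.sum_antidiagonal_choose_mul_choose (j r m : ℕ) :
    ∑ p ∈ antidiagonal m, p.1.choose j * p.2.choose r = (m + 1).choose (j + r + 1) := by
  induction m generalizing j with
  | zero =>
    cases j <;> cases r <;> simp <;> exact (Nat.choose_eq_zero_of_lt (by omega)).symm
  | succ m ih =>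
    rw [Nat.sum_antidiagonal_succ, Nat.choose_succ_succ' (m + 1)]
    cases j with
    | zero =>
      have h0 := ih 0
      simp only [Nat.choose_zero_right, one_mul] at h0 ⊢
      rw [h0, zero_add]
    | succ j =>
      conv_lhs => simp only [Nat.choose_succ_succ', add_mul, sum_add_distrib]
      rw [ih, ih, Nat.choose_zero_succ, zero_mul, zero_add, add_right_comm j 1 r]

theorem intChoose_natCast (m r : ℕ) : intChoose m r = m.choose r := by
  unfold intChoose
  split_ifs with h
  · simp
  · rw [Nat.choose_eq_zero_of_lt (by omega), Nat.cast_zero]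

theorem intChoose_of_neg {m r : ℤ} (hr : r < 0) : intChoose m r = 0 :=
  if_neg (by omega)

theorem intChoose_of_lt {m r : ℤ} (h : m < r) : intChoose m r = 0 :=
  if_neg (by omega)

theorem intChoose_add_one_left {m : ℤ} (hm : 0 ≤ m) (r : ℤ) :
    intChoose (m + 1) r = intChoose m r + intChoose m (r - 1) := by
  lift m to ℕ using hm
  rcases lt_or_ge r 0 with hr | hr
  · simp [intChoose_of_neg hr, intChoose_of_neg (show r - 1 < 0 by omega)]
  lift r to ℕ using hr
  cases r with
  | zero =>
    rw [intChoose_of_neg (show ((0 : ℕ) : ℤ) - 1 < 0 by simp), ← Nat.cast_succ,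
      intChoose_natCast, intChoose_natCast]
    simp
  | succ r =>
    push_cast
    rw [add_sub_cancel_right, ← Nat.cast_succ, ← Nat.cast_succ, intChoose_natCast,
      intChoose_natCast, intChoose_natCast, Nat.choose_succ_succ', Nat.cast_add]
    ring

theorem intChoose_symm {m : ℤ} (hm : 0 ≤ m) (r : ℤ) :
    intChoose m (m - r) = intChoose m r := by
  rcases lt_or_ge r 0 with hr | hr
  · rw [intChoose_of_lt (by omega), intChoose_of_neg hr]
  rcases lt_or_ge m r with hmr | hmr
  · rw [intChoose_of_neg (by omega), intChoose_of_lt hmr]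
  lift m to ℕ using hm
  lift r to ℕ using hr
  rw [← Nat.cast_sub (by omega), intChoose_natCast, intChoose_natCast, Nat.choose_symm (by omega)]

theorem intChoose_add_one_right_mul (m r : ℤ) :
    intChoose m (r + 1) * (r + 1) = intChoose m r * (m - r) := by
  rcases lt_or_ge r 0 with hr | hr
  · rcases eq_or_lt_of_le (show r + 1 ≤ 0 by omega) with h | h
    · simp [h, intChoose_of_neg hr]
    · simp [intChoose_of_neg h, intChoose_of_neg hr]
  rcases lt_or_ge m r with hmr | hmr
  · simp [intChoose_of_lt hmr, intChoose_of_lt (show m < r + 1 by omega)]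
  lift m to ℕ using (by omega)
  lift r to ℕ using hr
  rw [← Nat.cast_sub (by omega), ← Nat.cast_succ, intChoose_natCast, intChoose_natCast]
  exact_mod_cast Nat.choose_succ_right_eq m r

theorem intChoose_zero_right {m : ℤ} (hm : 0 ≤ m) : intChoose m 0 = 1 := by
  simp [intChoose, hm]

theorem intChoose_one_right {m : ℤ} (hm : 0 ≤ m) : intChoose m 1 = m := by
  simpa [intChoose_zero_right hm] using intChoose_add_one_right_mul m 0

theorem intChoose_two_right_mul_two {m : ℤ} (hm : 0 ≤ m) : intChoose m 2 * 2 = m * (m - 1) := by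
  have h := intChoose_add_one_right_mul m 1
  rwa [intChoose_one_right hm, one_add_one_eq_two] at h

theorem sum_range_intChoose_mul_intChoose {B : ℕ} {m j r : ℤ} (hj : 0 ≤ j) (hr : 0 ≤ r)
    (hm : m ≤ B + r) :
    ∑ b ∈ range (B + 1), intChoose b j * intChoose (m - b) r =
      intChoose (m + 1) (j + r + 1) := by
  rcases lt_or_ge m 0 with hm0 | hm0
  · rw [intChoose_of_lt (by omega)]
    exact sum_eq_zero fun b _ => by rw [intChoose_of_lt (m := m - b) (by omega), mul_zero]
  lift m to ℕ using hm0
  lift j to ℕ using hj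
  lift r to ℕ using hr
  have hvanish : ∀ b : ℕ, (m : ℤ) - r < b → intChoose b j * intChoose (m - b) r = 0 :=
    fun b hb => by rw [intChoose_of_lt (m := m - b) (by omega), mul_zero]
  calc ∑ b ∈ range (B + 1), intChoose b j * intChoose (m - b) r
      = ∑ b ∈ range (B + m + 1), intChoose b j * intChoose (m - b) r :=
        sum_subset (range_subset_range.2 (by omega)) fun b _ hb =>
          hvanish b (by rw [mem_range] at hb; omega)
    _ = ∑ b ∈ range (m + 1), intChoose b j * intChoose (m - b) r :=
        (sum_subset (range_subset_range.2 (by omega)) fun b _ hb =>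
          hvanish b (by rw [mem_range] at hb; omega)).symm
    _ = ∑ p ∈ antidiagonal m, ((p.1.choose j * p.2.choose r : ℕ) : ℤ) := by
        rw [Nat.sum_antidiagonal_eq_sum_range_succ_mk]
        refine sum_congr rfl fun b hb => ?_
        rw [mem_range] at hb
        rw [← Nat.cast_sub (by omega), intChoose_natCast, intChoose_natCast, Nat.cast_mul]
    _ = intChoose (m + 1) (j + r + 1) := by
        rw [← Nat.cast_sum, Nat.sum_antidiagonal_choose_mul_choose, ← intChoose_natCast]
        push_cast
        rfl

theorem sq_sub_three_eq_intChoose (b : ℕ) :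
    (b : ℤ) ^ 2 - 3 = 2 * intChoose b 2 + intChoose b 1 - 3 * intChoose b 0 := by
  have hb : (0 : ℤ) ≤ b := b.cast_nonneg
  linear_combination -intChoose_two_right_mul_two hb - intChoose_one_right hb +
    3 * intChoose_zero_right hb

theorem sum_Icc_sq_sub_three_mul_intChoose {B : ℕ} {m r : ℤ} (hr : 0 ≤ r) (hm : m ≤ B + r) :
    ∑ b ∈ Icc 1 B, ((b : ℤ) ^ 2 - 3) * intChoose (m - b) r =
      2 * intChoose (m + 1) (r + 3) + intChoose (m + 1) (r + 2) - 3 * intChoose (m + 1) (r + 1)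
        + 3 * intChoose m r := by
  have hrange : ∑ b ∈ range (B + 1), ((b : ℤ) ^ 2 - 3) * intChoose (m - b) r =
      2 * intChoose (m + 1) (r + 3) + intChoose (m + 1) (r + 2)
        - 3 * intChoose (m + 1) (r + 1) := by
    simp only [sq_sub_three_eq_intChoose, sub_mul, add_mul, mul_assoc, sum_sub_distrib,
      sum_add_distrib, ← mul_sum]
    rw [sum_range_intChoose_mul_intChoose two_pos.le hr hm,
      sum_range_intChoose_mul_intChoose zero_le_one hr hm,
      sum_range_intChoose_mul_intChoose le_rfl hr hm]
    ring_nf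
  have hsplit : range (B + 1) = insert 0 (Icc 1 B) := by
    ext b
    simp only [mem_range, mem_insert, mem_Icc]
    omega
  rw [hsplit, sum_insert (by simp), Nat.cast_zero, sub_zero] at hrange
  linear_combination hrange

theorem sum_Icc_sq_sub_three_mul_intChoose_sub_intChoose {B : ℕ} {m : ℤ} (h₁ : B ≤ m)
    (h₂ : m ≤ 2 * B) :
    ∑ b ∈ Icc 1 B, ((b : ℤ) ^ 2 - 3) * (intChoose (m - b) (m - B) - intChoose (m - b) B) =
      2 * (intChoose (m + 1) (B - 2) - intChoose (m + 1) (B - 1))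
        + 3 * (intChoose (m + 1) (B - 1) - intChoose (m + 1) B)
        + 3 * (intChoose (m + 1) (B + 1) - intChoose (m + 1) (B + 2))
        + 2 * (intChoose (m + 1) (B + 2) - intChoose (m + 1) (B + 3)) := by
  simp only [mul_sub, sum_sub_distrib]
  rw [sum_Icc_sq_sub_three_mul_intChoose (by omega) (by omega),
    sum_Icc_sq_sub_three_mul_intChoose (by omega) (by omega)]
  have hsymm (s : ℤ) : intChoose (m + 1) (m - B + s) = intChoose (m + 1) (B + 1 - s) := by
    rw [← intChoose_symm (by omega) (B + 1 - s)]
    ring_nf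
  rw [hsymm 3, hsymm 2, hsymm 1, ← intChoose_symm (by omega : 0 ≤ m) (m - B), sub_sub_cancel]
  ring_nf

/-- The upper index `s = r + 1` is a separate argument so that the lemma rewrites sums in which
it is written as, say, `n - 3` rather than `n - 4 + 1`. -/
theorem sum_Icc_two_pow_mul_intChoose_sub_intChoose {M : ℤ} (r s : ℤ) (hs : s = r + 1) {K : ℕ}
    (hK : K ≤ M) :
    ∑ k ∈ Icc 1 K, 2 ^ k * (intChoose (M - k) r - intChoose (M - k) s) =
      2 * intChoose M s - 2 ^ (K + 1) * intChoose (M - K) s := by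
  induction K with
  | zero => simp
  | succ K ih =>
    rw [sum_Icc_succ_top (by omega), ih (by omega)]
    have hpascal := intChoose_add_one_left (show 0 ≤ M - (K + 1 : ℕ) by omega) s
    rw [show M - ((K + 1 : ℕ) : ℤ) + 1 = M - K by push_cast; ring, hs, add_sub_cancel_right]
      at hpascal
    rw [hs, hpascal]
    push_cast
    ring

theorem sum_kb_inner_sum_eq {n k : ℕ} (hn : 2 ≤ n) (hk : k ≤ n - 2) :
    ∑ b ∈ Icc 1 (n - 2), ((b : ℤ) ^ 2 - 3) *
        (intChoose (2 * (n : ℤ) - b - k - 4) ((n : ℤ) - k - 2) -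
          intChoose (2 * (n : ℤ) - b - k - 4) ((n : ℤ) - 2)) =
      2 * (intChoose (2 * n - 3 - k) (n - 4) - intChoose (2 * n - 3 - k) (n - 3))
        + 3 * (intChoose (2 * n - 3 - k) (n - 3) - intChoose (2 * n - 3 - k) (n - 2))
        + 3 * (intChoose (2 * n - 3 - k) (n - 1) - intChoose (2 * n - 3 - k) n)
        + 2 * (intChoose (2 * n - 3 - k) n - intChoose (2 * n - 3 - k) (n + 1)) := by
  have h := sum_Icc_sq_sub_three_mul_intChoose_sub_intChoose (B := n - 2) (m := 2 * n - k - 4)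
    (by omega) (by omega)
  push_cast [Nat.cast_sub hn] at h
  refine (sum_congr rfl fun b _ => ?_).trans (h.trans ?_) <;> ring_nf

theorem weighted_sum_intChoose_sub_one {n : ℤ} (hn : 1 ≤ n) :
    2 * intChoose (n - 1) (n - 3) + 3 * intChoose (n - 1) (n - 2) + 3 * intChoose (n - 1) n
      + 2 * intChoose (n - 1) (n + 1) = n ^ 2 - 1 := by
  have h₁ : intChoose (n - 1) (n - 2) = n - 1 := by
    rw [show n - 2 = n - 1 - 1 by ring, intChoose_symm (by omega), intChoose_one_right (by omega)]
  have h₂ : intChoose (n - 1) (n - 3) * 2 = (n - 1) * (n - 2) := by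
    rw [show n - 3 = n - 1 - 2 by ring, intChoose_symm (by omega),
      intChoose_two_right_mul_two (by omega)]
    ring
  rw [intChoose_of_lt (show n - 1 < n by omega), intChoose_of_lt (show n - 1 < n + 1 by omega)]
  linear_combination h₂ + 3 * h₁

theorem weighted_sum_intChoose_two_mul_sub_three {n : ℤ} (hn : 2 ≤ n) :
    n * (n + 1) * (2 * intChoose (2 * n - 3) (n - 3) + 3 * intChoose (2 * n - 3) (n - 2)
      + 3 * intChoose (2 * n - 3) n + 2 * intChoose (2 * n - 3) (n + 1)) =
      2 * (5 * n - 1) * (n - 1) * intChoose (2 * n - 3) (n - 2) := by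
  have hsymm₀ := intChoose_symm (m := 2 * n - 3) (by omega) (n - 3)
  have hsymm₁ := intChoose_symm (m := 2 * n - 3) (by omega) (n - 4)
  have hratio₀ := intChoose_add_one_right_mul (2 * n - 3) (n - 3)
  have hratio₁ := intChoose_add_one_right_mul (2 * n - 3) (n - 4)
  rw [show 2 * n - 3 - (n - 3) = n by ring] at hsymm₀
  rw [show 2 * n - 3 - (n - 4) = n + 1 by ring] at hsymm₁
  rw [show n - 3 + 1 = n - 2 by ring, show 2 * n - 3 - (n - 3) = n by ring] at hratio₀
  rw [show n - 4 + 1 = n - 3 by ring, show 2 * n - 3 - (n - 4) = n + 1 by ring] at hratio₁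
  linear_combination (3 * n * (n + 1)) * hsymm₀ + (2 * n * (n + 1)) * hsymm₁
    - (7 * n - 1) * hratio₀ - 2 * n * hratio₁

theorem intChoose_two_mul_sub_two_eq_two_mul {n : ℤ} (hn : 2 ≤ n) :
    intChoose (2 * n - 2) (n - 1) = 2 * intChoose (2 * n - 3) (n - 2) := by
  have hpascal := intChoose_add_one_left (m := 2 * n - 3) (by omega) (n - 1)
  have hsymm := intChoose_symm (m := 2 * n - 3) (by omega) (n - 2)
  rw [show 2 * n - 3 + 1 = 2 * n - 2 by ring, show n - 1 - 1 = n - 2 by ring] at hpascal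
  rw [show 2 * n - 3 - (n - 2) = n - 1 by ring] at hsymm
  linear_combination hpascal + hsymm

theorem sum_kb_choose_identity (n : ℕ) (hn : 2 ≤ n) :
    (n:ℤ)*((n:ℤ) + 1) * ∑ k ∈ Finset.Icc 1 (n-2), (2:ℤ)^k *
        ∑ b ∈ Finset.Icc 1 (n-2), ((b : ℤ)^2 - 3) *
          (intChoose (2*(n:ℤ) - b - k - 4) ((n:ℤ) - k - 2) -
            intChoose (2*(n:ℤ) - b - k - 4) ((n:ℤ) - 2)) =
      4*(3*(n:ℤ)^3 + 7*(n:ℤ)^2 - 7*(n:ℤ) + 1) * intChoose (2*(n:ℤ) - 3) ((n:ℤ) - 2)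
        - (n:ℤ)*((n:ℤ) + 1)*((n:ℤ)^2 - 1) * 2^(n-1)
        - 2*(n:ℤ)*((n:ℤ) + 1)*(3*(n:ℤ) - 1) * intChoose (2*(n:ℤ) - 2) ((n:ℤ) - 1) := by
  rw [sum_congr rfl fun k hk =>
    congrArg ((2 : ℤ) ^ k * ·) (sum_kb_inner_sum_eq hn (mem_Icc.1 hk).2)]
  simp only [mul_add, mul_left_comm _ (2 : ℤ), mul_left_comm _ (3 : ℤ), sum_add_distrib,
    ← mul_sum]
  have hK : ((n - 2 : ℕ) : ℤ) ≤ 2 * n - 3 := by omega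
  rw [sum_Icc_two_pow_mul_intChoose_sub_intChoose (n - 4) (n - 3) (by ring) hK,
    sum_Icc_two_pow_mul_intChoose_sub_intChoose (n - 3) (n - 2) (by ring) hK,
    sum_Icc_two_pow_mul_intChoose_sub_intChoose (n - 1) n (by ring) hK,
    sum_Icc_two_pow_mul_intChoose_sub_intChoose n (n + 1) (by ring) hK,
    show 2 * (n : ℤ) - 3 - ((n - 2 : ℕ) : ℤ) = n - 1 by omega,
    show n - 2 + 1 = n - 1 by omega]
  have hn' : (2 : ℤ) ≤ n := by exact_mod_cast hn
  linear_combination 2 * weighted_sum_intChoose_two_mul_sub_three hn'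
    - n * (n + 1) * 2 ^ (n - 1) * weighted_sum_intChoose_sub_one (by omega : (1 : ℤ) ≤ n)
    + 2 * n * (n + 1) * (3 * n - 1) * intChoose_two_mul_sub_two_eq_two_mul hn'
end
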